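/- arXiv:2408.15905 — 2 statements merged into one kernel-verified Lean document; each statement's English description precedes it below -/
import Mathlib

section
/- Let X be a set, (X_i) a sequence of functions X_i : Ω → D ⊆ ℝ^d converging uniformly on Ω to U : Ω → D, and let f : D → ℝ and g : D × D → ℝ be Lipschitz continuous with g bounded below by a positive constant on D × D. Then for every fixed x ∈ D and every sequence (ω_i) in Ω, if the limit L(x) = lim_{n→∞} (Σ_{i=1}^n f(U(ω_i)) g(x, U(ω_i))) / (Σ_{i=1}^n g(x, U(ω_i))) exists and f is bounded, then lim_{n→∞} (Σ_{i=1}^n f(X_i(ω_i)) g(x, X_i(ω_i))) / (Σ_{i=1}^n g(x, X_i(ω_i))) also exists and equals L(x). -/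
open Filter Topology

theorem stmt_10 {Ω : Type*} {d : ℕ} (D : Set (EuclideanSpace ℝ (Fin d)))
    (hDb : Bornology.IsBounded D)
    (X : ℕ → Ω → EuclideanSpace ℝ (Fin d)) (U : Ω → EuclideanSpace ℝ (Fin d))
    (hXD : ∀ i ω, X i ω ∈ D) (hUD : ∀ ω, U ω ∈ D)
    (hunif : TendstoUniformly X U atTop)
    (f : EuclideanSpace ℝ (Fin d) → ℝ)
    (g : EuclideanSpace ℝ (Fin d) → EuclideanSpace ℝ (Fin d) → ℝ)
    (Kf Kg : NNReal) (hfL : LipschitzOnWith Kf f D)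
    (hgL : LipschitzOnWith Kg (fun q => g q.1 q.2) (D ×ˢ D))
    (c : ℝ) (hc : 0 < c) (hgc : ∀ y ∈ D, ∀ y' ∈ D, c ≤ g y y')
    (B : ℝ) (hfB : ∀ y ∈ D, |f y| ≤ B)
    (x : EuclideanSpace ℝ (Fin d)) (hx : x ∈ D)
    (ω : ℕ → Ω) (L : ℝ)
    (hL : Tendsto (fun n =>
        (∑ i ∈ Finset.range n, f (U (ω i)) * g x (U (ω i))) /
        (∑ i ∈ Finset.range n, g x (U (ω i)))) atTop (𝓝 L)) :
    Tendsto (fun n =>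
        (∑ i ∈ Finset.range n, f (X i (ω i)) * g x (X i (ω i))) /
        (∑ i ∈ Finset.range n, g x (X i (ω i)))) atTop (𝓝 L) := by
  classical
  obtain ⟨C, hC⟩ := Metric.isBounded_iff.mp hDb
  set e : ℕ → ℝ := fun i => dist (X i (ω i)) (U (ω i)) with he_def
  have he0 : ∀ i, 0 ≤ e i := fun i => dist_nonneg
  -- e tends to 0
  have hetend : Tendsto e atTop (𝓝 0) := by
    rw [Metric.tendstoUniformly_iff] at hunif
    rw [Metric.tendsto_atTop]
    intro ε hε
    obtain ⟨N, hN⟩ := Filter.eventually_atTop.mp (hunif ε hε)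
    refine ⟨N, fun n hn => ?_⟩
    have := hN n hn (ω n)
    rw [Real.dist_eq, sub_zero, abs_of_nonneg (he0 n)]
    simpa [he_def, dist_comm] using this
  have hB0 : 0 ≤ B := le_trans (abs_nonneg _) (hfB x hx)
  have hC0 : 0 ≤ C := le_trans dist_nonneg (hC hx hx)
  set G : ℝ := |g x x| + (Kg : ℝ) * C with hG_def
  have hG0 : 0 ≤ G := by positivity
  -- g x · is Lipschitz-bounded on D
  have hg1 : ∀ p ∈ D, ∀ q ∈ D, |g x p - g x q| ≤ (Kg : ℝ) * dist p q := by
    intro p hp q hq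
    have := hgL.dist_le_mul (x := (x, p)) ⟨hx, hp⟩ (y := (x, q)) ⟨hx, hq⟩
    simp only [Prod.dist_eq, Real.dist_eq] at this
    simpa [dist_self, max_eq_right dist_nonneg] using this
  have hgb : ∀ p ∈ D, |g x p| ≤ G := by
    intro p hp
    calc |g x p| ≤ |g x p - g x x| + |g x x| := by
          simpa using abs_add_le (g x p - g x x) (g x x)
      _ ≤ (Kg : ℝ) * dist p x + |g x x| := by
          gcongr; exact hg1 p hp x hx
      _ ≤ (Kg : ℝ) * C + |g x x| := by gcongr; exact hC hp hx
      _ = G := by ring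
  set M : ℝ := B * (Kg : ℝ) + G * (Kf : ℝ) with hM_def
  have hM0 : 0 ≤ M := by positivity
  have h2 : ∀ p ∈ D, ∀ q ∈ D, |f p * g x p - f q * g x q| ≤ M * dist p q := by
    intro p hp q hq
    have hf' : |f p - f q| ≤ (Kf : ℝ) * dist p q := by
      have := hfL.dist_le_mul p hp q hq
      rwa [Real.dist_eq] at this
    calc |f p * g x p - f q * g x q|
        = |f p * (g x p - g x q) + (f p - f q) * g x q| := by ring_nf
      _ ≤ |f p * (g x p - g x q)| + |(f p - f q) * g x q| := abs_add_le _ _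
      _ = |f p| * |g x p - g x q| + |f p - f q| * |g x q| := by
          rw [abs_mul, abs_mul]
      _ ≤ B * ((Kg : ℝ) * dist p q) + ((Kf : ℝ) * dist p q) * G := by
          refine add_le_add ?_ ?_
          · exact mul_le_mul (hfB p hp) (hg1 p hp q hq) (abs_nonneg _) hB0
          · exact mul_le_mul hf' (hgb q hq) (abs_nonneg _) (by positivity)
      _ = M * dist p q := by ring
  -- notation for the four sums
  set S : ℕ → ℝ := fun n => ∑ i ∈ Finset.range n, f (X i (ω i)) * g x (X i (ω i)) with hS_def
  set T : ℕ → ℝ := fun n => ∑ i ∈ Finset.range n, f (U (ω i)) * g x (U (ω i)) with hT_def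
  set P : ℕ → ℝ := fun n => ∑ i ∈ Finset.range n, g x (X i (ω i)) with hP_def
  set Q : ℕ → ℝ := fun n => ∑ i ∈ Finset.range n, g x (U (ω i)) with hQ_def
  set E : ℕ → ℝ := fun n => ∑ i ∈ Finset.range n, e i with hE_def
  have hE0 : ∀ n, 0 ≤ E n := fun n => Finset.sum_nonneg fun i _ => he0 i
  have hST : ∀ n, |S n - T n| ≤ M * E n := by
    intro n
    calc |S n - T n|
        = |∑ i ∈ Finset.range n,
            (f (X i (ω i)) * g x (X i (ω i)) - f (U (ω i)) * g x (U (ω i)))| := by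
          rw [Finset.sum_sub_distrib]
      _ ≤ ∑ i ∈ Finset.range n,
            |f (X i (ω i)) * g x (X i (ω i)) - f (U (ω i)) * g x (U (ω i))| :=
          Finset.abs_sum_le_sum_abs _ _
      _ ≤ ∑ i ∈ Finset.range n, M * e i := by
          refine Finset.sum_le_sum fun i _ => ?_
          exact h2 _ (hXD i (ω i)) _ (hUD (ω i))
      _ = M * E n := by rw [Finset.mul_sum]
  have hQP : ∀ n, |Q n - P n| ≤ (Kg : ℝ) * E n := by
    intro n
    calc |Q n - P n|
        = |∑ i ∈ Finset.range n, (g x (U (ω i)) - g x (X i (ω i)))| := by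
          rw [Finset.sum_sub_distrib]
      _ ≤ ∑ i ∈ Finset.range n, |g x (U (ω i)) - g x (X i (ω i))| :=
          Finset.abs_sum_le_sum_abs _ _
      _ ≤ ∑ i ∈ Finset.range n, (Kg : ℝ) * e i := by
          refine Finset.sum_le_sum fun i _ => ?_
          have := hg1 _ (hUD (ω i)) _ (hXD i (ω i))
          simpa [he_def, dist_comm] using this
      _ = (Kg : ℝ) * E n := by rw [Finset.mul_sum]
  have hPc : ∀ n : ℕ, (n : ℝ) * c ≤ P n := by
    intro n
    calc (n : ℝ) * c = ∑ _i ∈ Finset.range n, c := by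
          rw [Finset.sum_const, Finset.card_range, nsmul_eq_mul]
      _ ≤ P n := Finset.sum_le_sum fun i _ => hgc x hx _ (hXD i (ω i))
  have hQc : ∀ n : ℕ, (n : ℝ) * c ≤ Q n := by
    intro n
    calc (n : ℝ) * c = ∑ _i ∈ Finset.range n, c := by
          rw [Finset.sum_const, Finset.card_range, nsmul_eq_mul]
      _ ≤ Q n := Finset.sum_le_sum fun i _ => hgc x hx _ (hUD (ω i))
  have hTQ : ∀ n, |T n| ≤ B * Q n := by
    intro n
    calc |T n| ≤ ∑ i ∈ Finset.range n, |f (U (ω i)) * g x (U (ω i))| :=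
          Finset.abs_sum_le_sum_abs _ _
      _ ≤ ∑ i ∈ Finset.range n, B * g x (U (ω i)) := by
          refine Finset.sum_le_sum fun i _ => ?_
          rw [abs_mul]
          have hgpos : 0 < g x (U (ω i)) := lt_of_lt_of_le hc (hgc x hx _ (hUD (ω i)))
          rw [abs_of_pos hgpos]
          exact mul_le_mul_of_nonneg_right (hfB _ (hUD (ω i))) hgpos.le
      _ = B * Q n := by rw [Finset.mul_sum]
  -- the difference tends to 0
  have hdiff : Tendsto (fun n => S n / P n - T n / Q n) atTop (𝓝 0) := by
    have hbound : Tendsto (fun n : ℕ => ((M + B * (Kg : ℝ)) / c) * ((n : ℝ)⁻¹ * E n))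
        atTop (𝓝 0) := by
      have hces : Tendsto (fun n : ℕ => (n : ℝ)⁻¹ * E n) atTop (𝓝 0) := by
        have := hetend.cesaro
        simpa [hE_def, smul_eq_mul] using this
      simpa using hces.const_mul ((M + B * (Kg : ℝ)) / c)
    refine squeeze_zero_norm' ?_ hbound
    filter_upwards [Filter.eventually_ge_atTop 1] with n hn
    have hn0 : (0 : ℝ) < (n : ℝ) := by exact_mod_cast hn
    have hP0 : 0 < P n := lt_of_lt_of_le (by positivity) (hPc n)
    have hQ0 : 0 < Q n := lt_of_lt_of_le (by positivity) (hQc n)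
    have key : S n / P n - T n / Q n = (S n - T n) / P n + T n * (Q n - P n) / (P n * Q n) := by
      field_simp
      ring
    rw [Real.norm_eq_abs, key]
    have h1' : |(S n - T n) / P n| ≤ M * E n / ((n : ℝ) * c) := by
      rw [abs_div, abs_of_pos hP0]
      exact div_le_div₀ (by positivity) (hST n) (by positivity) (hPc n)
    have h2' : |T n * (Q n - P n) / (P n * Q n)| ≤ B * (Kg : ℝ) * E n / ((n : ℝ) * c) := by
      rw [abs_div, abs_mul, abs_of_pos (by positivity : (0:ℝ) < P n * Q n)]
      have hnum : |T n| * |Q n - P n| ≤ (B * Q n) * ((Kg : ℝ) * E n) :=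
        mul_le_mul (hTQ n) (hQP n) (abs_nonneg _) (by positivity)
      calc |T n| * |Q n - P n| / (P n * Q n)
          ≤ (B * Q n) * ((Kg : ℝ) * E n) / (P n * Q n) := by
            exact div_le_div_of_nonneg_right hnum (by positivity) |>.trans_eq rfl
        _ = B * (Kg : ℝ) * E n / P n := by field_simp
        _ ≤ B * (Kg : ℝ) * E n / ((n : ℝ) * c) := by
            exact div_le_div₀ (by positivity) le_rfl (by positivity) (hPc n)
    calc |(S n - T n) / P n + T n * (Q n - P n) / (P n * Q n)|
        ≤ |(S n - T n) / P n| + |T n * (Q n - P n) / (P n * Q n)| := abs_add_le _ _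
      _ ≤ M * E n / ((n : ℝ) * c) + B * (Kg : ℝ) * E n / ((n : ℝ) * c) := add_le_add h1' h2'
      _ = ((M + B * (Kg : ℝ)) / c) * ((n : ℝ)⁻¹ * E n) := by field_simp
  have := hL.add hdiff
  rw [add_zero] at this
  have heq : (fun n => T n / Q n + (S n / P n - T n / Q n)) = fun n => S n / P n := by
    funext n; ring
  rw [heq] at this
  exact this
end

section
/- Let r : [a,b] → ℝ be a bounded nonnegative L¹ function with ∫_a^b r > 0, and define the trajectory-balance target: for a three-step chain with deterministic factorization, if forward transition densities p_F satisfy Z · p_F(s₀,s₁) p_F(s₁,s₂) p_F(s₂,x) = r(x) · p_B(x,s₂) p_B(s₂,s₁) p_B(s₁,s₀) for all trajectories (s₀,s₁,s₂,x) with Z = ∫_a^b r, and each p_F(s,·) and p_B(s,·) is a probability density, then the marginal density of the terminal state x under forward sampling equals r(x)/Z. -/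
/-! On a trajectory ending at `x`, trajectory balance rewrites the forward path density as
`r x / Z` times the backward path density `pB x s₂ * pB s₂ s₁` (the last backward factor is `1`).
Integrating out `s₁` and then `s₂` (Fubini for a continuous integrand on a square), the backward
transition densities have total mass `1`, leaving `r x / Z`. -/

open MeasureTheory intervalIntegral Set

theorem intervalIntegral_integral_swap_of_continuousOn {a b c d : ℝ} (hab : a ≤ b) (hcd : c ≤ d)
    {f : ℝ → ℝ → ℝ} (hf : ContinuousOn (Function.uncurry f) (Icc a b ×ˢ Icc c d)) :
    (∫ x in a..b, ∫ y in c..d, f x y) = ∫ y in c..d, ∫ x in a..b, f x y := by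
  simp only [integral_of_le hab, integral_of_le hcd]
  refine integral_integral_swap ?_
  rw [Measure.prod_restrict]
  exact (hf.integrableOn_compact (isCompact_Icc.prod isCompact_Icc)).mono_set
    (prod_mono Ioc_subset_Icc_self Ioc_subset_Icc_self)

theorem intervalIntegral_integral_mul_transition_eq {a b : ℝ} (hab : a ≤ b) {q : ℝ → ℝ}
    {p : ℝ → ℝ → ℝ} (hq : ContinuousOn q (Icc a b))
    (hp : ContinuousOn (Function.uncurry p) (Icc a b ×ˢ Icc a b))
    (hp1 : ∀ s ∈ Icc a b, ∫ t in a..b, p s t = 1) :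
    (∫ t in a..b, ∫ s in a..b, q s * p s t) = ∫ s in a..b, q s := by
  have hqp : ContinuousOn (Function.uncurry fun t s => q s * p s t) (Icc a b ×ˢ Icc a b) :=
    (hq.comp continuousOn_snd fun z hz => hz.2).mul
      (hp.comp (continuous_snd.prodMk continuous_fst).continuousOn fun z hz => ⟨hz.2, hz.1⟩)
  rw [intervalIntegral_integral_swap_of_continuousOn hab hab hqp]
  refine integral_congr fun s hs => ?_
  rw [uIcc_of_le hab] at hs
  simp only [intervalIntegral.integral_const_mul, hp1 s hs, mul_one]

theorem stmt_16_general (a b : ℝ) (hab : a < b) (r : ℝ → ℝ)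
    (hZ : 0 < ∫ y in a..b, r y)
    (pF pB : ℝ → ℝ → ℝ) (s₀ : ℝ)
    (hpBc : Continuous fun q : ℝ × ℝ => pB q.1 q.2)
    (hpB1 : ∀ s, (∫ t in a..b, pB s t) = 1)
    (hpBs₀ : ∀ s₁, pB s₁ s₀ = 1)
    (hTB : ∀ s₁ ∈ Set.Icc a b, ∀ s₂ ∈ Set.Icc a b, ∀ x ∈ Set.Icc a b,
      (∫ y in a..b, r y) * (pF s₀ s₁ * pF s₁ s₂ * pF s₂ x)
        = r x * (pB x s₂ * pB s₂ s₁ * pB s₁ s₀)) :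
    ∀ x ∈ Set.Icc a b,
      (∫ s₁ in a..b, ∫ s₂ in a..b, pF s₀ s₁ * pF s₁ s₂ * pF s₂ x)
        = r x / (∫ y in a..b, r y) := by
  intro x hx
  have hpath : ∀ s₁ ∈ uIcc a b, (∫ s₂ in a..b, pF s₀ s₁ * pF s₁ s₂ * pF s₂ x)
      = r x / (∫ y in a..b, r y) * ∫ s₂ in a..b, pB x s₂ * pB s₂ s₁ := by
    intro s₁ hs₁
    rw [← intervalIntegral.integral_const_mul]
    refine integral_congr fun s₂ hs₂ => ?_
    rw [uIcc_of_le hab.le] at hs₁ hs₂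
    have h := hTB s₁ hs₁ s₂ hs₂ x hx
    rw [hpBs₀, mul_one] at h
    rw [div_mul_eq_mul_div, eq_div_iff hZ.ne', mul_comm, h]
  rw [integral_congr hpath, intervalIntegral.integral_const_mul,
    intervalIntegral_integral_mul_transition_eq (q := pB x) hab.le
      (hpBc.comp (Continuous.prodMk_right x)).continuousOn hpBc.continuousOn fun s _ => hpB1 s,
    hpB1, mul_one]

theorem stmt_16 (a b : ℝ) (hab : a < b) (r : ℝ → ℝ) (hr0 : ∀ x, 0 ≤ r x)
    (hrI : IntervalIntegrable r volume a b) (hZ : 0 < ∫ y in a..b, r y)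
    (pF pB : ℝ → ℝ → ℝ) (s₀ : ℝ)
    (hpFc : Continuous fun q : ℝ × ℝ => pF q.1 q.2)
    (hpBc : Continuous fun q : ℝ × ℝ => pB q.1 q.2)
    (hpF0 : ∀ s t, 0 ≤ pF s t) (hpB0 : ∀ s t, 0 ≤ pB s t)
    (hpF1 : ∀ s, (∫ t in a..b, pF s t) = 1)
    (hpB1 : ∀ s, (∫ t in a..b, pB s t) = 1)
    (hpBs₀ : ∀ s₁, pB s₁ s₀ = 1)
    (hTB : ∀ s₁ ∈ Set.Icc a b, ∀ s₂ ∈ Set.Icc a b, ∀ x ∈ Set.Icc a b,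
      (∫ y in a..b, r y) * (pF s₀ s₁ * pF s₁ s₂ * pF s₂ x)
        = r x * (pB x s₂ * pB s₂ s₁ * pB s₁ s₀)) :
    ∀ x ∈ Set.Icc a b,
      (∫ s₁ in a..b, ∫ s₂ in a..b, pF s₀ s₁ * pF s₁ s₂ * pF s₂ x)
        = r x / (∫ y in a..b, r y) :=
  stmt_16_general a b hab r hZ pF pB s₀ hpBc hpB1 hpBs₀ hTB
end
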